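/- arXiv:2209.14648 — 2 statements merged into one kernel-verified Lean document; each statement's English description precedes it below -/
import Mathlib

section
/- Let G be a profinite group and {G_t | t ∈ T} a collection of closed subgroups indexed by a profinite space T. Then the family is continuous (i.e., for every open subgroup U of G the set {t ∈ T | G_t ≤ U} is open in T) if and only if the set {(g,t) ∈ G × T | g ∈ G_t} is closed in G × T. -/
/-!
If the graph is closed, the set of `t` with `Gt t ⊄ U` is the projection to `T` of the closed
set `graph ∩ (Uᶜ × T)`, which is closed because `G` is compact. Conversely, a point `(g, t)` off
the graph is separated from `Gt t` by an open (hence clopen) subgroup `U ⊇ Gt t` with `g ∉ U`,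
since a closed subgroup of a profinite group is the intersection of the open subgroups
containing it; then `Uᶜ × {t' | Gt t' ≤ U}` is a neighbourhood of `(g, t)` missing the graph.
-/

open Set

theorem isOpen_setOf_subset_of_isClosed_graph {X T : Type*} [TopologicalSpace X]
    [CompactSpace X] [TopologicalSpace T] {F : T → Set X}
    (hF : IsClosed {p : X × T | p.1 ∈ F p.2}) {U : Set X} (hU : IsOpen U) :
    IsOpen {t | F t ⊆ U} := by
  have hcompl : {t | F t ⊆ U}ᶜ = Prod.snd '' ({p : X × T | p.1 ∈ F p.2} ∩ Uᶜ ×ˢ univ) := by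
    ext t
    simp [not_subset]
  rw [← isClosed_compl_iff, hcompl]
  exact isClosedMap_snd_of_compactSpace _ (hF.inter (hU.isClosed_compl.prod isClosed_univ))

theorem ProfiniteGrp.exists_isOpen_subgroup_le_notMem {G : Type*} [Group G]
    [TopologicalSpace G] [IsTopologicalGroup G] [CompactSpace G] [TotallyDisconnectedSpace G]
    {H : Subgroup G} (hH : IsClosed (H : Set G)) {g : G} (hg : g ∉ H) :
    ∃ U : Subgroup G, IsOpen (U : Set G) ∧ H ≤ U ∧ g ∉ U := by
  have hsInf : H = sInf {U : Subgroup G | IsOpen (U : Set G) ∧ H ≤ U} :=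
    closedSubgroup_eq_sInf_open ⟨H, hH⟩
  by_contra! hall
  exact hg (hsInf ▸ Subgroup.mem_sInf.mpr fun U hU => hall U hU.1 hU.2)

theorem continuous_family_iff_closed_graph_general
    (G T : Type*) [Group G] [TopologicalSpace G] [IsTopologicalGroup G]
    [CompactSpace G] [TotallyDisconnectedSpace G]
    [TopologicalSpace T]
    (Gt : T → Subgroup G) (hclosed : ∀ t, IsClosed (Gt t : Set G)) :
    (∀ U : Subgroup G, IsOpen (U : Set G) → IsOpen {t : T | Gt t ≤ U}) ↔
      IsClosed {p : G × T | p.1 ∈ Gt p.2} := by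
  refine ⟨fun hcont => ?_, fun hgraph U hU => isOpen_setOf_subset_of_isClosed_graph hgraph hU⟩
  rw [← isOpen_compl_iff, isOpen_iff_forall_mem_open]
  rintro ⟨g, t⟩ (hgt : g ∉ Gt t)
  obtain ⟨U, hU, hle, hgU⟩ := ProfiniteGrp.exists_isOpen_subgroup_le_notMem (hclosed t) hgt
  refine ⟨(U : Set G)ᶜ ×ˢ {t' | Gt t' ≤ U}, ?_,
    (U.isClosed_of_isOpen hU).isOpen_compl.prod (hcont U hU), hgU, hle⟩
  rintro ⟨g', t'⟩ ⟨hg'U, hle'⟩ hg'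
  exact hg'U (hle' hg')

/-- For a profinite group `G`, a profinite space `T` and a family of
closed subgroups `Gt t ≤ G` indexed by `T`, the family is continuous (for every open
subgroup `U` of `G` the set `{t | Gt t ≤ U}` is open) iff
`{(g,t) | g ∈ Gt t}` is closed in `G × T`. -/
theorem continuous_family_iff_closed_graph
    (G T : Type*) [Group G] [TopologicalSpace G] [IsTopologicalGroup G]
    [CompactSpace G] [T2Space G] [TotallyDisconnectedSpace G]
    [TopologicalSpace T] [CompactSpace T] [T2Space T] [TotallyDisconnectedSpace T]
    (Gt : T → Subgroup G) (hclosed : ∀ t, IsClosed (Gt t : Set G)) :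
    (∀ U : Subgroup G, IsOpen (U : Set G) → IsOpen {t : T | Gt t ≤ U}) ↔
      IsClosed {p : G × T | p.1 ∈ Gt p.2} :=
  continuous_family_iff_closed_graph_general G T Gt hclosed
end

section
/- Let G be a profinite group acting continuously on a profinite space T. Then the family of point stabilizers {G_t | t ∈ T} is continuous, i.e., for every open subgroup U of G, the set {t ∈ T | G_t ≤ U} is open in T. -/
/-! The graph of the stabilizers, `{(t, g) | t • g = t}`, is closed in `T × G` because `T` is
Hausdorff. Since `G` is compact, projecting the closed set of its points with `g ∉ U` to `T`
gives a closed set, whose complement is exactly `{t | G_t ⊆ U}`. -/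

theorem isOpen_setOf_forall_mem_imp_mem_of_isClosed {X Y : Type*} [TopologicalSpace X]
    [TopologicalSpace Y] [CompactSpace Y] {S : Set (X × Y)} (hS : IsClosed S) {U : Set Y}
    (hU : IsOpen U) : IsOpen {x | ∀ y, (x, y) ∈ S → y ∈ U} := by
  have hbad : IsClosed (Prod.fst '' (S ∩ Prod.snd ⁻¹' Uᶜ)) :=
    isClosedMap_fst_of_compactSpace _ (hS.inter (hU.isClosed_compl.preimage continuous_snd))
  convert hbad.isOpen_compl using 1
  ext x
  simp only [Set.mem_ofPred_eq, Set.mem_compl_iff, Set.mem_image, Set.mem_inter_iff,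
    Set.mem_preimage, Prod.exists, exists_and_right, exists_eq_right, not_exists, not_and,
    not_not]

theorem stabilizer_family_continuous_general
    (G T : Type*) [Group G] [TopologicalSpace G]
    [CompactSpace G]
    [TopologicalSpace T] [T2Space T]
    (act : T → G → T)
    (hcont : Continuous fun p : T × G => act p.1 p.2) :
    ∀ U : Subgroup G, IsOpen (U : Set G) →
      IsOpen {t : T | {g : G | act t g = t} ⊆ (U : Set G)} := fun _ hU =>
  isOpen_setOf_forall_mem_imp_mem_of_isClosed (isClosed_eq hcont continuous_fst) hU

/-- For a profinite group `G` acting continuously on a profinite space `T`,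
the family of point stabilizers is continuous: for every open subgroup `U ≤ G` the set
`{t | G_t ⊆ U}` is open in `T`. -/
theorem stabilizer_family_continuous
    (G T : Type*) [Group G] [TopologicalSpace G] [IsTopologicalGroup G]
    [CompactSpace G] [T2Space G] [TotallyDisconnectedSpace G]
    [TopologicalSpace T] [CompactSpace T] [T2Space T] [TotallyDisconnectedSpace T]
    (act : T → G → T)
    (hcont : Continuous fun p : T × G => act p.1 p.2)
    (hone : ∀ t, act t 1 = t)
    (hmul : ∀ t g h, act (act t g) h = act t (g * h)) :
    ∀ U : Subgroup G, IsOpen (U : Set G) →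
      IsOpen {t : T | {g : G | act t g = t} ⊆ (U : Set G)} :=
  stabilizer_family_continuous_general G T act hcont
end
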